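/- arXiv:2504.06503 — 7 statements merged into one kernel-verified Lean document; each statement's English description precedes it below -/
import Mathlib

section
/- Let G be a k-regular directed graph on vertices v_1,…,v_n and φ: V(G) → ℝ a kNN-realization of G with φ(v_1) < φ(v_2) < ⋯ < φ(v_n). Then for every i ∈ [n] there exists p_i ∈ [n−k] with p_i ≤ i ≤ p_i + k such that out[v_i] = {v_{p_i}, v_{p_i+1}, …, v_{p_i+k}}; that is, the closed out-neighborhood of each vertex is a contiguous block of k+1 vertices containing the vertex itself. -/
/-- Block structure of out-neighborhoods for a kNN-realization on the line:
the closed out-neighborhood of each vertex `v i` is a contiguous block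
`{v p, …, v (p+k)}` of `k+1` vertices containing `v i` itself. -/
theorem stmt_1 {V : Type} [Fintype V] (n k : ℕ) (E : V → V → Prop)
    (hirr : ∀ x : V, ¬ E x x)
    (hreg : ∀ x : V, {y : V | E x y}.ncard = k)
    (v : Fin n → V) (hv : Function.Bijective v)
    (φ : V → ℝ) (hinj : Function.Injective φ)
    (hmono : ∀ i j : Fin n, i < j → φ (v i) < φ (v j))
    (hreal : ∀ x y y' : V, x ≠ y → x ≠ y' → y ≠ y' → E x y → ¬ E x y' →
      |φ x - φ y| < |φ x - φ y'|) :
    ∀ i : Fin n, ∃ p : ℕ, p + k < n ∧ p ≤ (i : ℕ) ∧ (i : ℕ) ≤ p + k ∧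
      ∀ x : V, (x = v i ∨ E (v i) x) ↔
        ∃ j : Fin n, p ≤ (j : ℕ) ∧ (j : ℕ) ≤ p + k ∧ x = v j := by
  classical
  intro i
  set S : Finset (Fin n) := Finset.univ.filter (fun j => v i = v j ∨ E (v i) (v j)) with hS
  have hmem : ∀ j, j ∈ S ↔ (v i = v j ∨ E (v i) (v j)) := by
    intro j; simp [hS]
  have hiS : i ∈ S := (hmem i).2 (Or.inl rfl)
  have hSne : S.Nonempty := ⟨i, hiS⟩
  -- cardinality
  have hcard : S.card = k + 1 := by
    have himg : S.image v = insert (v i) {y | E (v i) y}.toFinset := by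
      ext y
      simp only [Finset.mem_image, Finset.mem_insert, Set.mem_toFinset, Set.mem_setOf_eq]
      constructor
      · rintro ⟨j, hj, rfl⟩
        rcases (hmem j).1 hj with h | h
        · exact Or.inl h.symm
        · exact Or.inr h
      · rintro (rfl | h)
        · exact ⟨i, hiS, rfl⟩
        · obtain ⟨j, rfl⟩ := hv.2 y
          exact ⟨j, (hmem j).2 (Or.inr h), rfl⟩
    have h1 : (S.image v).card = S.card := Finset.card_image_of_injective _ hv.1
    have h2 : (insert (v i) {y | E (v i) y}.toFinset).card = k + 1 := by
      rw [Finset.card_insert_of_notMem (by simp [hirr (v i)])]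
      have := hreg (v i)
      rw [Set.ncard_eq_toFinset_card'] at this
      omega
    rw [← h1, himg, h2]
  -- convexity
  have hconv : ∀ a b c : Fin n, a ∈ S → c ∈ S → a ≤ b → b ≤ c → b ∈ S := by
    intro a b c ha hc hab hbc
    by_contra hb
    have hbne : v i ≠ v b := fun h => hb ((hmem b).2 (Or.inl h))
    have hbE : ¬ E (v i) (v b) := fun h => hb ((hmem b).2 (Or.inr h))
    have hbi : b ≠ i := by rintro rfl; exact hb hiS
    rcases lt_or_gt_of_ne hbi with hlt | hgt
    · have hab' : a < b := lt_of_le_of_ne hab (by rintro rfl; exact hb ha)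
      have hai : a ≠ i := ne_of_lt (hab'.trans hlt)
      have haE : E (v i) (v a) := by
        rcases (hmem a).1 ha with h | h
        · exact absurd (hv.1 h).symm hai
        · exact h
      have key := hreal (v i) (v a) (v b)
        (fun h => hai (hv.1 h).symm) hbne
        (fun h => absurd (hv.1 h) hab'.ne) haE hbE
      have h1 : φ (v a) < φ (v b) := hmono a b hab'
      have h2 : φ (v b) < φ (v i) := hmono b i hlt
      rw [abs_of_pos (by linarith), abs_of_pos (by linarith)] at key
      linarith
    · have hbc' : b < c := lt_of_le_of_ne hbc (by rintro rfl; exact hb hc)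
      have hci : c ≠ i := ne_of_gt (hgt.trans hbc')
      have hcE : E (v i) (v c) := by
        rcases (hmem c).1 hc with h | h
        · exact absurd (hv.1 h).symm hci
        · exact h
      have key := hreal (v i) (v c) (v b)
        (fun h => hci (hv.1 h).symm) hbne
        (fun h => absurd (hv.1 h) hbc'.ne') hcE hbE
      have h1 : φ (v b) < φ (v c) := hmono b c hbc'
      have h2 : φ (v i) < φ (v b) := hmono i b hgt
      rw [abs_of_neg (by linarith), abs_of_neg (by linarith)] at key
      linarith
  set a := S.min' hSne with ha
  set bm := S.max' hSne with hbm
  have hIcc : S = Finset.Icc a bm := by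
    ext j
    simp only [Finset.mem_Icc]
    constructor
    · intro hj; exact ⟨S.min'_le j hj, S.le_max' j hj⟩
    · rintro ⟨h1, h2⟩; exact hconv _ j _ (S.min'_mem hSne) (S.max'_mem hSne) h1 h2
  have hab : (a : ℕ) ≤ (bm : ℕ) := S.min'_le bm (S.max'_mem hSne)
  have hcard2 : (bm : ℕ) + 1 - (a : ℕ) = k + 1 := by
    rw [hIcc, Fin.card_Icc] at hcard
    exact hcard
  have hbk : (bm : ℕ) = (a : ℕ) + k := by omega
  refine ⟨(a : ℕ), ?_, ?_, ?_, ?_⟩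
  · have := bm.isLt; omega
  · exact S.min'_le i hiS
  · have := S.le_max' i hiS
    rw [← hbk]; exact this
  · intro y
    constructor
    · intro hy
      obtain ⟨j, rfl⟩ := hv.2 y
      have hj : j ∈ S := (hmem j).2 (by rcases hy with h | h; exact Or.inl h.symm; exact Or.inr h)
      refine ⟨j, S.min'_le j hj, ?_, rfl⟩
      rw [← hbk]; exact S.le_max' j hj
    · rintro ⟨j, h1, h2, rfl⟩
      have hj : j ∈ S := by
        rw [hIcc, Finset.mem_Icc]
        exact ⟨h1, by rw [Fin.le_def, hbk]; exact h2⟩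
      rcases (hmem j).1 hj with h | h
      · exact Or.inl h.symm
      · exact Or.inr h
end

section
/- Let G be a k-regular directed graph on vertices v_1,…,v_n and φ a kNN-realization of G with φ(v_1) < ⋯ < φ(v_n), and let p_i be the indices such that out[v_i] = {v_{p_i},…,v_{p_i+k}}. Then p_1 ≤ p_2 ≤ ⋯ ≤ p_n (the blocks of out-neighborhoods are monotonically ordered along the line). -/
/-- Monotonicity of the out-neighborhood blocks: if `out[v i] = {v (p i), …, v (p i + k)}`
for a kNN-realization on the line, then `p` is monotone. -/
theorem stmt_2 {V : Type} [Fintype V] (n k : ℕ) (E : V → V → Prop)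
    (hirr : ∀ x : V, ¬ E x x)
    (hreg : ∀ x : V, {y : V | E x y}.ncard = k)
    (v : Fin n → V) (hv : Function.Bijective v)
    (φ : V → ℝ) (hinj : Function.Injective φ)
    (hmono : ∀ i j : Fin n, i < j → φ (v i) < φ (v j))
    (hreal : ∀ x y y' : V, x ≠ y → x ≠ y' → y ≠ y' → E x y → ¬ E x y' →
      |φ x - φ y| < |φ x - φ y'|)
    (p : Fin n → ℕ)
    (hp : ∀ i : Fin n, p i + k < n ∧ p i ≤ (i : ℕ) ∧ (i : ℕ) ≤ p i + k)
    (hblock : ∀ (i : Fin n) (x : V), (x = v i ∨ E (v i) x) ↔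
      ∃ j : Fin n, p i ≤ (j : ℕ) ∧ (j : ℕ) ≤ p i + k ∧ x = v j) :
    Monotone p := by
  intro i j hij
  rcases lt_or_eq_of_le hij with hij | hij
  swap
  · rw [hij]
  by_contra hcon
  push_neg at hcon
  -- hcon : p j < p i
  obtain ⟨hbi, hpi1, hpi2⟩ := hp i
  obtain ⟨hbj, hpj1, hpj2⟩ := hp j
  set A : Fin n := ⟨p j, lt_of_le_of_lt (Nat.le_add_right _ _) hbj⟩ with hA
  set B : Fin n := ⟨p i + k, hbi⟩ with hB
  have hAi : A < i := by rw [Fin.lt_def]; simp only [hA]; omega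
  have hjB : j < B := by rw [Fin.lt_def]; simp only [hB]; omega
  have hAB : A < B := by rw [Fin.lt_def]; simp only [hA, hB]; omega
  have hiB : (i : ℕ) ≤ (B : ℕ) := hpi2
  -- memberships
  have hBmem : v B = v i ∨ E (v i) (v B) := by
    rw [hblock i]
    exact ⟨B, by simp [hB], by simp [hB], rfl⟩
  have hAmemj : v A = v j ∨ E (v j) (v A) := by
    rw [hblock j]
    exact ⟨A, le_rfl, Nat.le_add_right _ _, rfl⟩
  have hAnot : ¬ (v A = v i ∨ E (v i) (v A)) := by
    rw [hblock i]
    rintro ⟨j', h1, h2, h3⟩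
    have : A = j' := hv.injective h3
    subst this
    exact absurd h1 (not_le.mpr hcon)
  have hBnotj : ¬ (v B = v j ∨ E (v j) (v B)) := by
    rw [hblock j]
    rintro ⟨j', h1, h2, h3⟩
    have : B = j' := hv.injective h3
    subst this
    have : (B : ℕ) ≤ p j + k := h2
    simp only [hB] at this
    omega
  -- basic φ orderings
  have hφAi : φ (v A) < φ (v i) := hmono _ _ hAi
  have hφij : φ (v i) < φ (v j) := hmono _ _ hij
  have hφjB : φ (v j) < φ (v B) := hmono _ _ hjB
  have hneAi : φ (v A) ≠ φ (v i) := ne_of_lt hφAi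
  have hnEiA : ¬ E (v i) (v A) := fun h => hAnot (Or.inr h)
  have hnEjB : ¬ E (v j) (v B) := fun h => hBnotj (Or.inr h)
  -- key inequalities
  have ineq1 : |φ (v i) - φ (v B)| < |φ (v i) - φ (v A)| := by
    rcases hBmem with h | h
    · rw [h]
      simp only [sub_self, abs_zero]
      rw [abs_pos, sub_ne_zero]
      exact hneAi.symm
    · refine hreal (v i) (v B) (v A) ?_ ?_ ?_ h hnEiA
      · intro he; exact hirr _ (he ▸ h)
      · intro he; exact hneAi (by rw [he])
      · intro he
        exact absurd (hv.injective he) (ne_of_lt hAB).symm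
  have ineq2 : |φ (v j) - φ (v A)| < |φ (v j) - φ (v B)| := by
    rcases hAmemj with h | h
    · rw [h]
      simp only [sub_self, abs_zero]
      rw [abs_pos, sub_ne_zero]
      exact ne_of_lt hφjB
    · refine hreal (v j) (v A) (v B) ?_ ?_ ?_ h hnEjB
      · intro he; exact hirr _ (he ▸ h)
      · intro he; exact (ne_of_lt hφjB) (by rw [← he])
      · intro he
        exact absurd (hv.injective he) (ne_of_lt hAB)
  rw [abs_of_nonpos (by linarith), abs_of_nonneg (by linarith)] at ineq1
  rw [abs_of_nonneg (by linarith), abs_of_nonpos (by linarith)] at ineq2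
  linarith
end

section
/- Let G be a k-regular directed graph on vertices v_1,…,v_n admitting a kNN-realization φ with φ(v_1)<⋯<φ(v_n). Then for every i there exist indices q_i ≤ q_i' with q_i' ≤ q_i + 2k such that in[v_i] = {v_{q_i}, v_{q_i+1}, …, v_{q_i'}}; moreover both sequences (q_i) and (q_i') are nondecreasing in i. In particular, every vertex has in-degree at most 2k in any graph kNN-realizable on the line. -/
/-- Block structure of in-neighborhoods for a kNN-realization on the line: each
`in[v i]` is a contiguous block `{v (q i), …, v (q' i)}` with `q' i ≤ q i + 2k`,
the sequences `q` and `q'` are nondecreasing, and every in-degree is at most `2k`. -/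
theorem stmt_3 {V : Type} [Fintype V] (n k : ℕ) (E : V → V → Prop)
    (hirr : ∀ x : V, ¬ E x x)
    (hreg : ∀ x : V, {y : V | E x y}.ncard = k)
    (v : Fin n → V) (hv : Function.Bijective v)
    (φ : V → ℝ) (hinj : Function.Injective φ)
    (hmono : ∀ i j : Fin n, i < j → φ (v i) < φ (v j))
    (hreal : ∀ x y y' : V, x ≠ y → x ≠ y' → y ≠ y' → E x y → ¬ E x y' →
      |φ x - φ y| < |φ x - φ y'|) :
    (∃ q q' : Fin n → ℕ,
      (∀ i : Fin n, q i ≤ q' i ∧ q' i ≤ q i + 2 * k ∧ q' i < n ∧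
        ∀ x : V, (x = v i ∨ E x (v i)) ↔
          ∃ j : Fin n, q i ≤ (j : ℕ) ∧ (j : ℕ) ≤ q' i ∧ x = v j) ∧
      Monotone q ∧ Monotone q') ∧
    ∀ x : V, {y : V | E y x}.ncard ≤ 2 * k := by
  classical
  have hinjv : Function.Injective v := hv.1
  -- Claim B
  have claimB : ∀ x z y : V, E x z → y ≠ x → y ≠ z →
      |φ x - φ y| < |φ x - φ z| → E x y := by
    intro x z y hxz hyx hyz hlt
    by_contra hne
    have hxz' : x ≠ z := fun h => hirr x (h ▸ hxz)
    have := hreal x z y hxz' (Ne.symm hyx) (Ne.symm hyz) hxz hne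
    linarith
  -- Claim A
  have claimA : ∀ x y z : V, E x z → x ≠ y → y ≠ z →
      |φ x - φ y| + |φ y - φ z| = |φ x - φ z| → E y z := by
    intro x y z hxz hxy hyz htri
    by_contra hnE
    have hd : 0 < |φ y - φ z| := abs_pos.mpr (sub_ne_zero.mpr (fun h => hyz (hinj h)))
    have hd2 : 0 < |φ x - φ y| := abs_pos.mpr (sub_ne_zero.mpr (fun h => hxy (hinj h)))
    have hExy : E x y := claimB x z y hxz (Ne.symm hxy) hyz (by linarith)
    set T : Set V := {u | E y u} with hTdef
    set N : Set V := {u | E x u} with hNdef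
    have hyT : y ∉ T := hirr y
    have hzT : z ∉ T := hnE
    have hsub : insert y (insert z (T \ {x})) ⊆ N := by
      intro u hu
      simp only [Set.mem_insert_iff, Set.mem_diff, Set.mem_singleton_iff] at hu
      rcases hu with rfl | rfl | ⟨huT, hux⟩
      · exact hExy
      · exact hxz
      · have huT' : E y u := huT
        have huy : y ≠ u := fun h => hirr u (h ▸ huT')
        have huz : u ≠ z := fun h => hnE (h ▸ huT')
        have h1 : |φ y - φ u| < |φ y - φ z| := hreal y u z huy hyz huz huT' hnE
        have h2 : |φ x - φ u| ≤ |φ x - φ y| + |φ y - φ u| := abs_sub_le _ _ _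
        exact claimB x z u hxz hux huz (by linarith)
    have hN : N.ncard = k := hreg x
    have hT : T.ncard = k := hreg y
    have h1 : T.ncard ≤ (T \ {x}).ncard + 1 := by
      calc T.ncard ≤ (insert x (T \ {x})).ncard :=
            Set.ncard_le_ncard (fun u hu => by
              by_cases h : u = x
              · exact Or.inl h
              · exact Or.inr ⟨hu, h⟩) (Set.toFinite _)
        _ ≤ (T \ {x}).ncard + 1 := Set.ncard_insert_le _ _
    have h2 : (insert y (insert z (T \ {x}))).ncard = (T \ {x}).ncard + 2 := by
      rw [Set.ncard_insert_of_notMem (by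
          simp only [Set.mem_insert_iff, Set.mem_diff, Set.mem_singleton_iff]
          push_neg
          exact ⟨hyz, fun h => absurd h hyT⟩),
        Set.ncard_insert_of_notMem (fun h => hzT h.1)]
    have h3 : (insert y (insert z (T \ {x}))).ncard ≤ N.ncard :=
      Set.ncard_le_ncard hsub (Set.toFinite _)
    omega
  -- triangle equality helper
  have tri : ∀ a b c : ℝ, (a ≤ b ∧ b ≤ c) ∨ (c ≤ b ∧ b ≤ a) → |a - b| + |b - c| = |a - c| := by
    intro a b c h
    rcases h with ⟨h1, h2⟩ | ⟨h1, h2⟩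
    · rw [abs_of_nonpos (by linarith), abs_of_nonpos (by linarith),
        abs_of_nonpos (by linarith)]; ring
    · rw [abs_of_nonneg (by linarith), abs_of_nonneg (by linarith),
        abs_of_nonneg (by linarith)]; ring
  -- strict abs comparison helper
  have habs : ∀ r s t : ℝ, (r < s ∧ s < t) ∨ (t < s ∧ s < r) → |r - s| < |r - t| := by
    intro r s t h
    rcases h with ⟨h1, h2⟩ | ⟨h1, h2⟩
    · rw [abs_of_neg (by linarith), abs_of_neg (by linarith)]; linarith
    · rw [abs_of_pos (by linarith), abs_of_pos (by linarith)]; linarith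
  -- the block finset
  set S : Fin n → Finset (Fin n) :=
    fun i => Finset.univ.filter (fun j => j = i ∨ E (v j) (v i)) with hSdef
  have hmemS : ∀ i j : Fin n, j ∈ S i ↔ (j = i ∨ E (v j) (v i)) := by
    intro i j; simp [hSdef]
  have hSne : ∀ i, (S i).Nonempty := fun i => ⟨i, (hmemS i i).mpr (Or.inl rfl)⟩
  set q : Fin n → Fin n := fun i => (S i).min' (hSne i) with hqdef
  set q' : Fin n → Fin n := fun i => (S i).max' (hSne i) with hq'def
  have hqS : ∀ i, q i ∈ S i := fun i => (S i).min'_mem _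
  have hq'S : ∀ i, q' i ∈ S i := fun i => (S i).max'_mem _
  have hqle : ∀ i, q i ≤ i := fun i => Finset.min'_le _ _ ((hmemS i i).mpr (Or.inl rfl))
  have hleq' : ∀ i, i ≤ q' i := fun i => Finset.le_max' _ _ ((hmemS i i).mpr (Or.inl rfl))
  -- interval property (Claim A indexed)
  have hAB : ∀ i a j : Fin n, (a = i ∨ E (v a) (v i)) →
      ((a ≤ j ∧ j ≤ i) ∨ (i ≤ j ∧ j ≤ a)) → (j = i ∨ E (v j) (v i)) := by
    intro i a j hPa hbet
    rcases hPa with rfl | hE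
    · left
      rcases hbet with ⟨h1, h2⟩ | ⟨h1, h2⟩ <;> exact le_antisymm h2 h1
    · rcases eq_or_ne j i with rfl | hji
      · exact Or.inl rfl
      rcases eq_or_ne j a with rfl | hja
      · exact Or.inr hE
      have hai : a ≠ i := fun h => hirr (v a) (by rw [h] at hE ⊢; exact hE)
      right
      rcases hbet with ⟨h1, h2⟩ | ⟨h1, h2⟩
      · have haj : a < j := lt_of_le_of_ne h1 (Ne.symm hja)
        have hji' : j < i := lt_of_le_of_ne h2 hji
        exact claimA (v a) (v j) (v i) hE (fun h => hja (hinjv h).symm)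
          (fun h => hji (hinjv h))
          (tri _ _ _ (Or.inl ⟨le_of_lt (hmono a j haj), le_of_lt (hmono j i hji')⟩))
      · have hij : i < j := lt_of_le_of_ne h1 (Ne.symm hji)
        have hja' : j < a := lt_of_le_of_ne h2 hja
        exact claimA (v a) (v j) (v i) hE (fun h => hja (hinjv h).symm)
          (fun h => hji (hinjv h))
          (tri _ _ _ (Or.inr ⟨le_of_lt (hmono i j hij), le_of_lt (hmono j a hja')⟩))
  -- left count
  have hleft : ∀ a i : Fin n, a < i → E (v a) (v i) → (i : ℕ) - (a : ℕ) ≤ k := by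
    intro a i hai hE
    have hsub : ↑((Finset.Ioc a i).image v) ⊆ {u | E (v a) u} := by
      intro u hu
      simp only [Finset.coe_image, Set.mem_image, Finset.mem_coe, Finset.mem_Ioc] at hu
      obtain ⟨j, ⟨hj1, hj2⟩, rfl⟩ := hu
      rcases eq_or_ne j i with rfl | hji
      · exact hE
      have hji' : j < i := lt_of_le_of_ne hj2 hji
      exact claimB (v a) (v i) (v j) hE (fun h => (ne_of_lt hj1) (hinjv h).symm)
        (fun h => hji (hinjv h))
        (habs _ _ _ (Or.inl ⟨hmono a j hj1, hmono j i hji'⟩))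
    calc (i : ℕ) - (a : ℕ) = (Finset.Ioc a i).card := (Fin.card_Ioc a i).symm
      _ = ((Finset.Ioc a i).image v).card :=
          (Finset.card_image_of_injective _ hinjv).symm
      _ = (↑((Finset.Ioc a i).image v) : Set V).ncard := (Set.ncard_coe_finset _).symm
      _ ≤ {u | E (v a) u}.ncard := Set.ncard_le_ncard hsub (Set.toFinite _)
      _ = k := hreg (v a)
  -- right count
  have hright : ∀ b i : Fin n, i < b → E (v b) (v i) → (b : ℕ) - (i : ℕ) ≤ k := by
    intro b i hib hE
    have hsub : ↑((Finset.Ico i b).image v) ⊆ {u | E (v b) u} := by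
      intro u hu
      simp only [Finset.coe_image, Set.mem_image, Finset.mem_coe, Finset.mem_Ico] at hu
      obtain ⟨j, ⟨hj1, hj2⟩, rfl⟩ := hu
      rcases eq_or_ne j i with rfl | hji
      · exact hE
      have hij : i < j := lt_of_le_of_ne hj1 (Ne.symm hji)
      exact claimB (v b) (v i) (v j) hE (fun h => (ne_of_lt hj2) (hinjv h))
        (fun h => hji (hinjv h))
        (habs _ _ _ (Or.inr ⟨hmono i j hij, hmono j b hj2⟩))
    calc (b : ℕ) - (i : ℕ) = (Finset.Ico i b).card := (Fin.card_Ico i b).symm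
      _ = ((Finset.Ico i b).image v).card :=
          (Finset.card_image_of_injective _ hinjv).symm
      _ = (↑((Finset.Ico i b).image v) : Set V).ncard := (Set.ncard_coe_finset _).symm
      _ ≤ {u | E (v b) u}.ncard := Set.ncard_le_ncard hsub (Set.toFinite _)
      _ = k := hreg (v b)
  have hqk : ∀ i : Fin n, (i : ℕ) - (q i : ℕ) ≤ k := by
    intro i
    rcases eq_or_ne (q i) i with h | h
    · rw [h]; omega
    · have hE : E (v (q i)) (v i) := ((hmemS i (q i)).mp (hqS i)).resolve_left h
      exact hleft (q i) i (lt_of_le_of_ne (hqle i) h) hE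
  have hq'k : ∀ i : Fin n, (q' i : ℕ) - (i : ℕ) ≤ k := by
    intro i
    rcases eq_or_ne (q' i) i with h | h
    · rw [h]; omega
    · have hE : E (v (q' i)) (v i) := ((hmemS i (q' i)).mp (hq'S i)).resolve_left h
      exact hright (q' i) i (lt_of_le_of_ne (hleq' i) (Ne.symm h)) hE
  refine ⟨⟨fun i => (q i : ℕ), fun i => (q' i : ℕ), fun i => ⟨?_, ?_, (q' i).isLt, ?_⟩,
    ?_, ?_⟩, ?_⟩
  · exact Finset.min'_le _ _ (hq'S i)
  · show (q' i : ℕ) ≤ (q i : ℕ) + 2 * k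
    have h1 := hqk i; have h2 := hq'k i; have h3 := Fin.val_le_of_le (hqle i)
    have h4 := Fin.val_le_of_le (hleq' i)
    omega
  · intro x
    constructor
    · rintro hx
      obtain ⟨j, rfl⟩ := hv.2 x
      have hj : j ∈ S i := by
        refine (hmemS i j).mpr ?_
        rcases hx with hx | hx
        · exact Or.inl (hinjv hx)
        · exact Or.inr hx
      exact ⟨j, Finset.min'_le _ _ hj, Finset.le_max' _ _ hj, rfl⟩
    · rintro ⟨j, h1, h2, rfl⟩
      have h1' : q i ≤ j := h1
      have h2' : j ≤ q' i := h2
      rcases le_total j i with hji | hij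
      · have := hAB i (q i) j ((hmemS i (q i)).mp (hqS i)) (Or.inl ⟨h1', hji⟩)
        rcases this with h | h
        · exact Or.inl (by rw [h])
        · exact Or.inr h
      · have := hAB i (q' i) j ((hmemS i (q' i)).mp (hq'S i)) (Or.inr ⟨hij, h2'⟩)
        rcases this with h | h
        · exact Or.inl (by rw [h])
        · exact Or.inr h
  · -- Monotone q
    intro i i' hii'
    show (q i : ℕ) ≤ (q i' : ℕ)
    rcases eq_or_lt_of_le hii' with rfl | hlt
    · exact le_refl _
    rcases le_or_gt i (q i') with h | h
    · exact le_trans (Fin.val_le_of_le (hqle i)) (Fin.val_le_of_le h)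
    · have hne : q i' ≠ i' := fun heq => absurd (heq ▸ h) (not_lt.mpr (le_of_lt hlt))
      have hE : E (v (q i')) (v i') := ((hmemS i' (q i')).mp (hqS i')).resolve_left hne
      have hE2 : E (v (q i')) (v i) :=
        claimB (v (q i')) (v i') (v i) hE (fun heq => (ne_of_lt h) (hinjv heq).symm)
          (fun heq => (ne_of_lt hlt) (hinjv heq))
          (habs _ _ _ (Or.inl ⟨hmono (q i') i h, hmono i i' hlt⟩))
      exact Fin.val_le_of_le (Finset.min'_le _ _ ((hmemS i (q i')).mpr (Or.inr hE2)))
  · -- Monotone q'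
    intro i i' hii'
    show (q' i : ℕ) ≤ (q' i' : ℕ)
    rcases eq_or_lt_of_le hii' with rfl | hlt
    · exact le_refl _
    rcases le_or_gt (q' i) i' with h | h
    · exact le_trans (Fin.val_le_of_le h) (Fin.val_le_of_le (hleq' i'))
    · have hne : q' i ≠ i := by
        intro heq
        have h2 : i < q' i := lt_trans hlt h
        rw [heq] at h2
        exact lt_irrefl i h2
      have hE : E (v (q' i)) (v i) := ((hmemS i (q' i)).mp (hq'S i)).resolve_left hne
      have hE2 : E (v (q' i)) (v i') :=
        claimB (v (q' i)) (v i) (v i') hE (fun heq => (ne_of_lt h) (hinjv heq))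
          (fun heq => (ne_of_lt hlt) (hinjv heq).symm)
          (habs _ _ _ (Or.inr ⟨hmono i i' hlt, hmono i' (q' i) h⟩))
      exact Fin.val_le_of_le (Finset.le_max' _ _ ((hmemS i' (q' i)).mpr (Or.inr hE2)))
  · -- in-degree bound
    intro x
    obtain ⟨i, rfl⟩ := hv.2 x
    have hsub : {y | E y (v i)} ⊆ ↑(((Finset.Icc (q i) (q' i)).erase i).image v) := by
      intro y hy
      obtain ⟨j, rfl⟩ := hv.2 y
      have hji : j ≠ i := fun heq => hirr (v i) (heq ▸ hy)
      have hj : j ∈ S i := (hmemS i j).mpr (Or.inr hy)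
      simp only [Finset.coe_image, Set.mem_image, Finset.mem_coe, Finset.mem_erase,
        Finset.mem_Icc]
      exact ⟨j, ⟨hji, Finset.min'_le _ _ hj, Finset.le_max' _ _ hj⟩, rfl⟩
    have hiIcc : i ∈ Finset.Icc (q i) (q' i) := Finset.mem_Icc.mpr ⟨hqle i, hleq' i⟩
    calc {y | E y (v i)}.ncard
        ≤ (↑(((Finset.Icc (q i) (q' i)).erase i).image v) : Set V).ncard :=
          Set.ncard_le_ncard hsub (Set.toFinite _)
      _ = (((Finset.Icc (q i) (q' i)).erase i).image v).card := Set.ncard_coe_finset _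
      _ = ((Finset.Icc (q i) (q' i)).erase i).card := Finset.card_image_of_injective _ hinjv
      _ = (Finset.Icc (q i) (q' i)).card - 1 := Finset.card_erase_of_mem hiIcc
      _ ≤ 2 * k := by
          rw [Fin.card_Icc]
          have h1 := hqk i; have h2 := hq'k i; have h3 := Fin.val_le_of_le (hqle i)
          have h4 := Fin.val_le_of_le (hleq' i)
          omega
end

section
/- Let H be an undirected graph on n ≥ 2 vertices such that every subgraph H' of H with at least 2 vertices admits a vertex set S ⊆ V(H') with |S| ≤ c·|V(H')|^{1−1/d} whose removal leaves connected components of size at most ((d+1)/(d+2))·|V(H')|, and suppose every vertex of H has degree at most Δ. Then every subgraph H' of H with |V(H')| ≥ 2 admits a balanced cut (an edge set whose removal leaves all components of size ≤ |V(H')|/2) of size at most c'·|V(H')|^{1−1/d}, where c' depends only on c, d, and Δ. -/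
/-!
Let `n = |V(H')|` and `ρ = (d+1)/(d+2)`. At most one component of `H' - F` has more than `n/2`
vertices. Cutting every edge at a separator `S` of that component costs at most
`Δ |S| ≤ Δ c n^(1-1/d)` edges and splits it into singletons (the vertices of `S`) and pieces of
at most `ρ` times its size, while all other components only shrink. Starting from `F = ∅`, after
`K` rounds with `ρ^K < 1/2` no component exceeds `n/2`, so `c' = K Δ c` works.
-/

namespace SimpleGraph

variable {V : Type*} {G G' : SimpleGraph V}

theorem Reachable.mem_and_reachable_of_forall_adj {T : Set V}
    (h : ∀ a ∈ T, ∀ b, G.Adj a b → b ∈ T ∧ G'.Adj a b) {x y : V} (hx : x ∈ T)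
    (hr : G.Reachable x y) : y ∈ T ∧ G'.Reachable x y := by
  obtain ⟨w⟩ := hr
  induction w with
  | nil => exact ⟨hx, .rfl⟩
  | cons hab _ ih =>
    obtain ⟨hb, hab'⟩ := h _ hx _ hab
    obtain ⟨hy, hr⟩ := ih hb
    exact ⟨hy, hab'.reachable.trans hr⟩

namespace Subgraph

theorem fromRel_adj_and_notMem_eq_deleteEdges (H : G.Subgraph) (F : Set (Sym2 V)) :
    fromRel (fun a b => H.Adj a b ∧ s(a, b) ∉ F) = (H.deleteEdges F).spanningCoe := by
  ext a b
  simp only [fromRel_adj, spanningCoe_adj, deleteEdges_adj, Sym2.eq_swap (a := b)]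
  exact ⟨fun ⟨_, h⟩ => h.elim id fun h => ⟨h.1.symm, h.2⟩,
    fun h => ⟨h.1.ne, .inl h⟩⟩

def cutComponent (H : G.Subgraph) (F : Set (Sym2 V)) (x : V) : Set V :=
  {y | (H.deleteEdges F).spanningCoe.Reachable x y}

variable {H : G.Subgraph} {F F' : Set (Sym2 V)} {x x₀ : V}

theorem cutComponent_subset_verts (hx : x ∈ H.verts) : H.cutComponent F x ⊆ H.verts :=
  fun _ hy => (hy.mem_and_reachable_of_forall_adj
    (fun _ _ _ hab => ⟨H.edge_vert ((H.deleteEdges_le F).2 hab).symm, hab⟩) hx).1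

theorem cutComponent_anti (h : F ⊆ F') : H.cutComponent F' x ⊆ H.cutComponent F x :=
  fun _ hy => hy.mono (spanningCoe_le_of_le (deleteEdges_le_of_le h))

theorem cutComponent_subset_singleton (hx : ∀ y, H.Adj x y → s(x, y) ∈ F) :
    H.cutComponent F x ⊆ {x} :=
  fun _ hy => (hy.mem_and_reachable_of_forall_adj (G' := ⊤) (T := {x})
    (fun _ ha b hab => by
      rw [Set.mem_singleton_iff] at ha
      subst ha
      exact absurd (hx b hab.1) hab.2) rfl).1

theorem ncard_cutComponent_add_ncard_cutComponent_le [Finite V] (hx₀ : x₀ ∈ H.verts)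
    (hx : x ∈ H.verts) (hxC : x ∉ H.cutComponent F x₀) :
    (H.cutComponent F x₀).ncard + (H.cutComponent F x).ncard ≤ H.verts.ncard := by
  have hdisj : Disjoint (H.cutComponent F x₀) (H.cutComponent F x) :=
    Set.disjoint_left.2 fun _ hz₀ hz => hxC (hz₀.trans hz.symm)
  rw [← Set.ncard_union_eq hdisj]
  exact Set.ncard_le_ncard
    (Set.union_subset (cutComponent_subset_verts hx₀) (cutComponent_subset_verts hx))

def incidentEdges (H : G.Subgraph) (S : Set V) : Set (Sym2 V) :=
  {e ∈ H.edgeSet | ∃ v ∈ S, v ∈ e}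

theorem incidentEdges_subset (S : Set V) : H.incidentEdges S ⊆ H.edgeSet := fun _ he => he.1

theorem ncard_incidentEdges_le [Finite V] {Δ : ℕ} (hdeg : ∀ x, (G.neighborSet x).ncard ≤ Δ)
    (S : Set V) : (H.incidentEdges S).ncard ≤ S.ncard * Δ := by
  have hinc : ∀ v, (G.incidenceSet v).ncard ≤ Δ := fun v => by
    classical
    rw [← Nat.card_coe_set_eq, Nat.card_congr (G.incidenceSetEquivNeighborSet v),
      Nat.card_coe_set_eq]
    exact hdeg v
  calc (H.incidentEdges S).ncard
      ≤ (⋃ v ∈ S.toFinite.toFinset, G.incidenceSet v).ncard :=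
        Set.ncard_le_ncard fun _ ⟨he, v, hv, hve⟩ =>
          Set.mem_biUnion (by simpa using hv) ⟨H.edgeSet_subset he, hve⟩
    _ ≤ ∑ v ∈ S.toFinite.toFinset, (G.incidenceSet v).ncard :=
        Finset.set_ncard_biUnion_le _ _
    _ ≤ S.ncard * Δ := by
      rw [Set.ncard_eq_toFinset_card S]
      exact Finset.sum_le_card_nsmul _ _ _ fun v _ => hinc v

theorem cutComponent_union_incidentEdges_subset {S : Set V}
    (hx : x ∈ H.cutComponent F x₀ \ S) :
    H.cutComponent (F ∪ H.incidentEdges S) x ⊆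
      {y | (fromRel fun a b => ((H.deleteEdges F).induce (H.cutComponent F x₀)).Adj a b ∧
        a ∉ S ∧ b ∉ S).Reachable x y} := by
  refine fun _ hy => (hy.mem_and_reachable_of_forall_adj (T := H.cutComponent F x₀ \ S)
    (fun a ⟨haC, haS⟩ b hab => ?_) hx).2
  have hbS : b ∉ S := fun hb =>
    hab.2 (Set.mem_union_right _ ⟨hab.1, b, hb, Sym2.mem_mk_right a b⟩)
  have hab' : (H.deleteEdges F).Adj a b := ⟨hab.1, fun h => hab.2 (Set.mem_union_left _ h)⟩
  have hbC : b ∈ H.cutComponent F x₀ := Reachable.trans haC (Adj.reachable hab')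
  exact ⟨⟨hbC, hbS⟩, fromRel_adj _ a b |>.2 ⟨hab.1.ne, .inl ⟨⟨haC, hbC, hab'⟩, haS, hbS⟩⟩⟩

theorem ncard_cutComponent_union_incidentEdges_le [Finite V] {S : Set V} {m : ℝ}
    (hsep : ∀ x ∈ H.cutComponent F x₀ \ S,
      (({y | (fromRel fun a b => ((H.deleteEdges F).induce (H.cutComponent F x₀)).Adj a b ∧
        a ∉ S ∧ b ∉ S).Reachable x y}.ncard : ℝ) ≤ m))
    (hx : x ∈ H.cutComponent F x₀) :
    ((H.cutComponent (F ∪ H.incidentEdges S) x).ncard : ℝ) ≤ max m 1 := by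
  by_cases hxS : x ∈ S
  · have hsub := cutComponent_subset_singleton (H := H) (F := F ∪ H.incidentEdges S)
      fun y hxy => Set.mem_union_right _ ⟨hxy, x, hxS, Sym2.mem_mk_left x y⟩
    have hle : (H.cutComponent (F ∪ H.incidentEdges S) x).ncard ≤ 1 :=
      (Set.ncard_le_ncard hsub).trans_eq (Set.ncard_singleton x)
    exact le_max_of_le_right (by exact_mod_cast hle)
  · exact le_max_of_le_left <| (Nat.cast_le.2 <| Set.ncard_le_ncard <|
      cutComponent_union_incidentEdges_subset ⟨hx, hxS⟩).trans (hsep x ⟨hx, hxS⟩)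

theorem exists_cut_ncard_cutComponent_le_max_pow [Finite V] {ρ B : ℝ} (hρ : 0 ≤ ρ)
    (hB : 0 ≤ B) (hn : 2 ≤ H.verts.ncard)
    (hsplit : ∀ F x₀, x₀ ∈ H.verts → 2 ≤ (H.cutComponent F x₀).ncard →
      ∃ N ⊆ H.edgeSet, (N.ncard : ℝ) ≤ B ∧ ∀ x ∈ H.cutComponent F x₀,
        ((H.cutComponent (F ∪ N) x).ncard : ℝ) ≤ max (ρ * (H.cutComponent F x₀).ncard) 1)
    (k : ℕ) :
    ∃ F ⊆ H.edgeSet, (F.ncard : ℝ) ≤ k * B ∧ ∀ x ∈ H.verts,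
      ((H.cutComponent F x).ncard : ℝ) ≤ max (ρ ^ k * H.verts.ncard) (H.verts.ncard / 2) := by
  have hn' : (2 : ℝ) ≤ H.verts.ncard := by exact_mod_cast hn
  induction k with
  | zero =>
    refine ⟨∅, Set.empty_subset _, by simp, fun x hx => le_max_of_le_left ?_⟩
    simpa using Nat.cast_le (α := ℝ) |>.2 <| Set.ncard_le_ncard <|
      cutComponent_subset_verts (F := ∅) hx
  | succ k ih =>
    obtain ⟨F, hF, hFB, hFcomp⟩ := ih
    by_cases hbig : ∃ x₀ ∈ H.verts, (H.verts.ncard : ℝ) / 2 < (H.cutComponent F x₀).ncard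
    swap
    · push Not at hbig
      refine ⟨F, hF, hFB.trans ?_, fun x hx => le_max_of_le_right (hbig x hx)⟩
      push_cast
      linarith
    obtain ⟨x₀, hx₀, hbig⟩ := hbig
    set C := H.cutComponent F x₀
    have hCk : (C.ncard : ℝ) ≤ ρ ^ k * H.verts.ncard :=
      (le_max_iff.1 (hFcomp x₀ hx₀)).resolve_right (not_le.2 hbig)
    have hC2 : 2 ≤ C.ncard := by
      have : (1 : ℝ) < C.ncard := by linarith
      exact_mod_cast this
    obtain ⟨N, hN, hNB, hNcomp⟩ := hsplit F x₀ hx₀ hC2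
    refine ⟨F ∪ N, Set.union_subset hF hN, ?_, fun x hx => ?_⟩
    · calc ((F ∪ N).ncard : ℝ) ≤ F.ncard + N.ncard := by
            exact_mod_cast Set.ncard_union_le F N
        _ ≤ (k + 1 : ℕ) * B := by push_cast; linarith
    by_cases hxC : x ∈ C
    · refine (hNcomp x hxC).trans (max_le_max ?_ (by linarith))
      calc ρ * C.ncard ≤ ρ * (ρ ^ k * H.verts.ncard) := mul_le_mul_of_nonneg_left hCk hρ
        _ = ρ ^ (k + 1) * H.verts.ncard := by ring
    · have hsum : (C.ncard : ℝ) + (H.cutComponent F x).ncard ≤ H.verts.ncard := by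
        exact_mod_cast ncard_cutComponent_add_ncard_cutComponent_le hx₀ hx hxC
      have hanti : ((H.cutComponent (F ∪ N) x).ncard : ℝ) ≤ (H.cutComponent F x).ncard := by
        exact_mod_cast Set.ncard_le_ncard (cutComponent_anti Set.subset_union_left)
      exact le_max_of_le_right (by linarith)

end Subgraph

/-- The Miller–Teng–Thurston–Vavasis separator property, with exponent `e` and ratio `ρ`. -/
def HasSeparators (G : SimpleGraph V) (c e ρ : ℝ) : Prop :=
  ∀ H : G.Subgraph, 2 ≤ H.verts.ncard → ∃ S ⊆ H.verts,
    (S.ncard : ℝ) ≤ c * (H.verts.ncard : ℝ) ^ e ∧ ∀ x ∈ H.verts \ S,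
      ({y | (fromRel fun a b => H.Adj a b ∧ a ∉ S ∧ b ∉ S).Reachable x y}.ncard : ℝ) ≤
        ρ * H.verts.ncard

namespace HasSeparators

variable {c e ρ : ℝ} {Δ : ℕ} {H : G.Subgraph}

theorem nonneg (hsep : G.HasSeparators c e ρ) (hn : 2 ≤ H.verts.ncard) : 0 ≤ c := by
  obtain ⟨S, -, hS, -⟩ := hsep H hn
  exact nonneg_of_mul_nonneg_left ((Nat.cast_nonneg _).trans hS) (by positivity)

theorem exists_split [Finite V] (hsep : G.HasSeparators c e ρ)
    (hdeg : ∀ x, (G.neighborSet x).ncard ≤ Δ) (he : 0 ≤ e) {F : Set (Sym2 V)} {x₀ : V}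
    (hx₀ : x₀ ∈ H.verts) (hC2 : 2 ≤ (H.cutComponent F x₀).ncard) :
    ∃ N ⊆ H.edgeSet, (N.ncard : ℝ) ≤ Δ * (c * (H.verts.ncard : ℝ) ^ e) ∧
      ∀ x ∈ H.cutComponent F x₀,
        ((H.cutComponent (F ∪ N) x).ncard : ℝ) ≤ max (ρ * (H.cutComponent F x₀).ncard) 1 := by
  obtain ⟨S, -, hS, hSsep⟩ := hsep ((H.deleteEdges F).induce (H.cutComponent F x₀)) hC2
  have hc : 0 ≤ c := hsep.nonneg (H := (H.deleteEdges F).induce (H.cutComponent F x₀)) hC2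
  refine ⟨H.incidentEdges S, Subgraph.incidentEdges_subset S, ?_,
    fun x hx => Subgraph.ncard_cutComponent_union_incidentEdges_le hSsep hx⟩
  have hCn : ((H.cutComponent F x₀).ncard : ℝ) ≤ H.verts.ncard := by
    exact_mod_cast Set.ncard_le_ncard (Subgraph.cutComponent_subset_verts hx₀)
  calc ((H.incidentEdges S).ncard : ℝ) ≤ Δ * S.ncard := by
        rw [mul_comm]
        exact_mod_cast Subgraph.ncard_incidentEdges_le hdeg S
    _ ≤ Δ * (c * ((H.cutComponent F x₀).ncard : ℝ) ^ e) := by gcongr; exact hS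
    _ ≤ Δ * (c * (H.verts.ncard : ℝ) ^ e) := by gcongr

theorem exists_balanced_cut [Finite V] (hsep : G.HasSeparators c e ρ)
    (hdeg : ∀ x, (G.neighborSet x).ncard ≤ Δ) (he : 0 ≤ e) (hρ : 0 ≤ ρ) {K : ℕ}
    (hK : ρ ^ K ≤ 1 / 2) (hn : 2 ≤ H.verts.ncard) :
    ∃ F ⊆ H.edgeSet, (F.ncard : ℝ) ≤ K * Δ * c * (H.verts.ncard : ℝ) ^ e ∧
      ∀ x ∈ H.verts, ((H.cutComponent F x).ncard : ℝ) ≤ H.verts.ncard / 2 := by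
  have hc : 0 ≤ c := hsep.nonneg hn
  obtain ⟨F, hF, hFcard, hFcomp⟩ := H.exists_cut_ncard_cutComponent_le_max_pow hρ
    (by positivity) hn (fun _ _ hx₀ hC2 => hsep.exists_split hdeg he hx₀ hC2) K
  refine ⟨F, hF, hFcard.trans_eq (by ring), fun x hx => (hFcomp x hx).trans (max_le ?_ le_rfl)⟩
  have hn' : (0 : ℝ) ≤ H.verts.ncard := Nat.cast_nonneg _
  nlinarith

end HasSeparators

end SimpleGraph

theorem stmt_12_general (c : ℝ) (d Δ : ℕ) :
    ∃ c' : ℝ, ∀ (V : Type) [Fintype V] (H : SimpleGraph V),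
      (∀ x : V, {y : V | H.Adj x y}.ncard ≤ Δ) →
      (∀ H' : H.Subgraph, 2 ≤ H'.verts.ncard →
        ∃ S : Set V, S ⊆ H'.verts ∧
          (S.ncard : ℝ) ≤ c * (H'.verts.ncard : ℝ) ^ (1 - 1 / (d : ℝ)) ∧
          ∀ x ∈ H'.verts \ S,
            (({y : V | (SimpleGraph.fromRel
                (fun a b => H'.Adj a b ∧ a ∉ S ∧ b ∉ S)).Reachable x y}.ncard : ℝ)
              ≤ ((d : ℝ) + 1) / ((d : ℝ) + 2) * (H'.verts.ncard : ℝ))) →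
      ∀ H' : H.Subgraph, 2 ≤ H'.verts.ncard →
        ∃ F : Set (Sym2 V), F ⊆ H'.edgeSet ∧
          (F.ncard : ℝ) ≤ c' * (H'.verts.ncard : ℝ) ^ (1 - 1 / (d : ℝ)) ∧
          ∀ x ∈ H'.verts,
            (({y : V | (SimpleGraph.fromRel
                (fun a b => H'.Adj a b ∧ s(a, b) ∉ F)).Reachable x y}.ncard : ℝ)
              ≤ (H'.verts.ncard : ℝ) / 2) := by
  obtain ⟨K, hK⟩ := exists_pow_lt_of_lt_one (by norm_num : (0 : ℝ) < 1 / 2)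
    ((div_lt_one (by positivity)).2 (by linarith) : ((d : ℝ) + 1) / ((d : ℝ) + 2) < 1)
  refine ⟨K * Δ * c, fun V _ H hdeg hsep H' hn => ?_⟩
  have he : 0 ≤ 1 - 1 / (d : ℝ) := sub_nonneg.2 (one_div (d : ℝ) ▸ Nat.cast_inv_le_one d)
  obtain ⟨F, hF, hFcard, hFcomp⟩ :=
    SimpleGraph.HasSeparators.exists_balanced_cut hsep hdeg he (by positivity) hK.le hn
  refine ⟨F, hF, hFcard, fun x hx => ?_⟩
  rw [SimpleGraph.Subgraph.fromRel_adj_and_notMem_eq_deleteEdges]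
  exact hFcomp x hx

/-- If every subgraph of a bounded-degree graph `H` admits a small vertex separator
(Miller–Teng–Thurston–Vavasis property with exponent `1 - 1/d` and balance ratio
`(d+1)/(d+2)`), then every subgraph of `H` with at least 2 vertices admits a balanced
edge cut of size `c' * |V(H')|^(1-1/d)`, where `c'` depends only on `c`, `d`, `Δ`. -/
theorem stmt_12 (c : ℝ) (d Δ : ℕ) (hd : 1 ≤ d) :
    ∃ c' : ℝ, ∀ (V : Type) [Fintype V] (H : SimpleGraph V),
      (∀ x : V, {y : V | H.Adj x y}.ncard ≤ Δ) →
      (∀ H' : H.Subgraph, 2 ≤ H'.verts.ncard →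
        ∃ S : Set V, S ⊆ H'.verts ∧
          (S.ncard : ℝ) ≤ c * (H'.verts.ncard : ℝ) ^ (1 - 1 / (d : ℝ)) ∧
          ∀ x ∈ H'.verts \ S,
            (({y : V | (SimpleGraph.fromRel
                (fun a b => H'.Adj a b ∧ a ∉ S ∧ b ∉ S)).Reachable x y}.ncard : ℝ)
              ≤ ((d : ℝ) + 1) / ((d : ℝ) + 2) * (H'.verts.ncard : ℝ))) →
      ∀ H' : H.Subgraph, 2 ≤ H'.verts.ncard →
        ∃ F : Set (Sym2 V), F ⊆ H'.edgeSet ∧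
          (F.ncard : ℝ) ≤ c' * (H'.verts.ncard : ℝ) ^ (1 - 1 / (d : ℝ)) ∧
          ∀ x ∈ H'.verts,
            (({y : V | (SimpleGraph.fromRel
                (fun a b => H'.Adj a b ∧ s(a, b) ∉ F)).Reachable x y}.ncard : ℝ)
              ≤ (H'.verts.ncard : ℝ) / 2) :=
  stmt_12_general c d Δ
end

section
/- Let n_1,…,n_r be positive reals with Σ n_i = m and n_i ≤ m/2 for all i, and let 0 < α < 1. Then Σ_{i=1}^r n_i^{α} ≥ 2·(m/2)^{α} = 2^{1−α} m^{α}. -/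
/-- If positive reals `x i` sum to `m` and each is at most `m/2`, then for `0 < α < 1`,
`∑ i, (x i)^α ≥ 2^(1-α) * m^α`. -/
theorem stmt_15 (r : ℕ) (m α : ℝ) (hα0 : 0 < α) (hα1 : α < 1)
    (x : Fin r → ℝ) (hpos : ∀ i : Fin r, 0 < x i)
    (hsum : ∑ i, x i = m) (hhalf : ∀ i : Fin r, x i ≤ m / 2) :
    (2 : ℝ) ^ (1 - α) * m ^ α ≤ ∑ i, x i ^ α := by
  rcases eq_or_ne r 0 with hr | hr
  · subst hr
    simp only [Finset.univ_eq_empty, Finset.sum_empty] at hsum ⊢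
    rw [← hsum]
    rw [Real.zero_rpow hα0.ne', mul_zero]
  · have : 0 < r := Nat.pos_of_ne_zero hr
    have i0 : Fin r := ⟨0, this⟩
    have hm : 0 < m := by linarith [hpos i0, hhalf i0]
    have key : ∀ i : Fin r, x i * (m / 2) ^ (α - 1) ≤ x i ^ α := by
      intro i
      have hx := hpos i
      have h1 : (m / 2) ^ (α - 1) ≤ (x i) ^ (α - 1) := by
        apply Real.rpow_le_rpow_of_nonpos hx
        · exact hhalf i
        · linarith
      calc x i * (m / 2) ^ (α - 1) ≤ x i * (x i) ^ (α - 1) :=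
            mul_le_mul_of_nonneg_left h1 hx.le
        _ = x i ^ α := by
            nth_rewrite 1 [← Real.rpow_one (x i)]
            rw [← Real.rpow_add hx]; ring_nf
    have hsum2 : m * (m / 2) ^ (α - 1) ≤ ∑ i, x i ^ α := by
      calc m * (m / 2) ^ (α - 1) = ∑ i, x i * (m / 2) ^ (α - 1) := by
            rw [← Finset.sum_mul, hsum]
        _ ≤ ∑ i, x i ^ α := Finset.sum_le_sum fun i _ => key i
    have heq : m * (m / 2) ^ (α - 1) = (2 : ℝ) ^ (1 - α) * m ^ α := by
      rw [Real.div_rpow hm.le (by norm_num), div_eq_mul_inv, ← mul_assoc]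
      nth_rewrite 1 [← Real.rpow_one m]
      rw [← Real.rpow_add hm, ← Real.rpow_neg (by norm_num : (0:ℝ) ≤ 2)]
      ring_nf
    linarith [heq ▸ hsum2]
end

section
/- Let G be a k-regular directed graph on vertices v_1,…,v_n admitting a kNN-realization φ with φ(v_1)<⋯<φ(v_n); let p_i be such that out[v_i] = {v_{p_i},…,v_{p_i+k}}. If u = v_j and u' = v_{j'} are two vertices with |out[u] ∩ out[v]| = |out[u'] ∩ out[v]| = i for a fixed vertex v = v_s (with i ≥ 1), then out[u] and out[u'] each take one of at most two possible values: either out = {v_{p_s+i−1−k},…,v_{p_s+i−1}} or out = {v_{p_s+k−i+1},…,v_{p_s+2k−i+1}}. Hence the vertices u with |out[u] ∩ out[v]| = i fall into at most two out-equivalence classes. -/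
/-- Given the monotone block structure `out[v j] = {v (p j), …, v (p j + k)}` of a
kNN-realization on the line, if `|out[v j] ∩ out[v s]| = i ≥ 1` then `p j` takes one of
at most two values: `p j + k + 1 = p s + i` or `p j + i = p s + k + 1`. Hence the
vertices whose out-set meets `out[v s]` in exactly `i` elements fall into at most two
out-equivalence classes. -/
theorem stmt_17 {V : Type} [Fintype V] (n k : ℕ) (E : V → V → Prop)
    (v : Fin n → V) (hv : Function.Bijective v)
    (p : Fin n → ℕ)
    (hp : ∀ i : Fin n, p i + k < n ∧ p i ≤ (i : ℕ) ∧ (i : ℕ) ≤ p i + k)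
    (hpmono : Monotone p)
    (hblock : ∀ (i : Fin n) (x : V), (x = v i ∨ E (v i) x) ↔
      ∃ t : Fin n, p i ≤ (t : ℕ) ∧ (t : ℕ) ≤ p i + k ∧ x = v t)
    (s : Fin n) (i : ℕ) (hi : 1 ≤ i) :
    (∀ j : Fin n,
      ({x : V | x = v j ∨ E (v j) x} ∩ {x : V | x = v s ∨ E (v s) x}).ncard = i →
      (p j + k + 1 = p s + i ∨ p j + i = p s + k + 1)) ∧
    (∀ j j' j'' : Fin n,
      ({x : V | x = v j ∨ E (v j) x} ∩ {x : V | x = v s ∨ E (v s) x}).ncard = i →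
      ({x : V | x = v j' ∨ E (v j') x} ∩ {x : V | x = v s ∨ E (v s) x}).ncard = i →
      ({x : V | x = v j'' ∨ E (v j'') x} ∩ {x : V | x = v s ∨ E (v s) x}).ncard = i →
      p j = p j' ∨ p j = p j'' ∨ p j' = p j'') := by
  have npos : 0 < n := s.pos
  set w : ℕ → V := fun t => v ⟨t % n, Nat.mod_lt _ npos⟩ with hw
  have hwv : ∀ (t : Fin n), w (t : ℕ) = v t := by
    intro t
    simp [hw, Nat.mod_eq_of_lt t.isLt]
  have hA : ∀ j : Fin n, {x : V | x = v j ∨ E (v j) x} = w '' Set.Icc (p j) (p j + k) := by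
    intro j
    ext x
    rw [Set.mem_setOf_eq, hblock j x]
    constructor
    · rintro ⟨t, h1, h2, rfl⟩
      exact ⟨t, ⟨h1, h2⟩, hwv t⟩
    · rintro ⟨t, ⟨h1, h2⟩, rfl⟩
      have htn : t < n := lt_of_le_of_lt h2 (hp j).1
      exact ⟨⟨t, htn⟩, h1, h2, hwv ⟨t, htn⟩⟩
  have hinj : ∀ j : Fin n, Set.InjOn w (Set.Icc (p j) (p j + k) ∪ Set.Icc (p s) (p s + k)) := by
    intro j a ha b hb hab
    have haN : a < n := by
      rcases ha with h | h
      · exact lt_of_le_of_lt h.2 (hp j).1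
      · exact lt_of_le_of_lt h.2 (hp s).1
    have hbN : b < n := by
      rcases hb with h | h
      · exact lt_of_le_of_lt h.2 (hp j).1
      · exact lt_of_le_of_lt h.2 (hp s).1
    have := congrArg Fin.val (hv.injective hab)
    simpa [Nat.mod_eq_of_lt haN, Nat.mod_eq_of_lt hbN] using this
  have hcard : ∀ j : Fin n,
      ({x : V | x = v j ∨ E (v j) x} ∩ {x : V | x = v s ∨ E (v s) x}).ncard
        = ((p j + k) ⊓ (p s + k)) + 1 - ((p j) ⊔ (p s)) := by
    intro j
    rw [hA j, hA s, ← Set.InjOn.image_inter (hinj j) Set.subset_union_left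
        Set.subset_union_right, Set.ncard_image_of_injOn
        ((hinj j).mono (Set.inter_subset_left.trans Set.subset_union_left)),
      Set.Icc_inter_Icc, ← Finset.coe_Icc, Set.ncard_coe_finset, Nat.card_Icc]
  have main : ∀ j : Fin n,
      ({x : V | x = v j ∨ E (v j) x} ∩ {x : V | x = v s ∨ E (v s) x}).ncard = i →
      (p j + k + 1 = p s + i ∨ p j + i = p s + k + 1) := by
    intro j hj
    rw [hcard j] at hj
    rcases le_total (p j) (p s) with h | h <;>
      simp [min_def, max_def, h] at hj <;> omega
  refine ⟨main, fun j j' j'' h1 h2 h3 => ?_⟩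
  have := main j h1
  have := main j' h2
  have := main j'' h3
  omega
end

section
/- Let G be a k-regular directed graph on vertices v_1,…,v_n and let (v_1^*,…,v_n^*) be a feasible vertex ordering (i.e., some kNN-realization orders the images this way). Suppose an ordering (v_1,…,v_n) of V(G) satisfies: (a) for every i, v_i and v_i^* lie in the same out-equivalence class (out[v_i] = out[v_i^*]), and (b) for every i, in[v_i] = in[v_i^*]. Then the map π(v_i) = v_i^* is an automorphism of G, and consequently (v_1,…,v_n) is also a feasible vertex ordering of G. -/
/-- If `(v* 0, …, v* (n-1))` is a feasible vertex ordering of a `k`-regular directed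
graph `G` and another ordering `(v 0, …, v (n-1))` satisfies `out[v i] = out[v* i]` and
`in[v i] = in[v* i]` for all `i`, then the map `π (v i) = v* i` is an automorphism of
`G`, and `(v 0, …, v (n-1))` is also a feasible vertex ordering. -/
theorem stmt_19 {V : Type} [Fintype V] (n k : ℕ) (E : V → V → Prop)
    (hirr : ∀ x : V, ¬ E x x)
    (hreg : ∀ x : V, {y : V | E x y}.ncard = k)
    (vstar : Fin n → V) (hvstar : Function.Bijective vstar)
    (φ : V → ℝ) (hinj : Function.Injective φ)
    (hmonostar : ∀ i j : Fin n, i < j → φ (vstar i) < φ (vstar j))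
    (hreal : ∀ x y y' : V, x ≠ y → x ≠ y' → y ≠ y' → E x y → ¬ E x y' →
      |φ x - φ y| < |φ x - φ y'|)
    (v : Fin n → V) (hv : Function.Bijective v)
    (hout : ∀ (i : Fin n) (x : V), (x = v i ∨ E (v i) x) ↔ (x = vstar i ∨ E (vstar i) x))
    (hin : ∀ (i : Fin n) (x : V), (x = v i ∨ E x (v i)) ↔ (x = vstar i ∨ E x (vstar i))) :
    (∃ π : V → V, Function.Bijective π ∧ (∀ i : Fin n, π (v i) = vstar i) ∧
      ∀ a b : V, E a b ↔ E (π a) (π b)) ∧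
    (∃ ψ : V → ℝ, Function.Injective ψ ∧
      (∀ i j : Fin n, i < j → ψ (v i) < ψ (v j)) ∧
      ∀ x y y' : V, x ≠ y → x ≠ y' → y ≠ y' → E x y → ¬ E x y' →
        |ψ x - ψ y| < |ψ x - ψ y'|) := by
  set e := Equiv.ofBijective v hv with he
  set π : V → V := fun a => vstar (e.symm a) with hπ
  have hπv : ∀ i : Fin n, π (v i) = vstar i := by
    intro i
    have : e.symm (v i) = i := e.symm_apply_apply i
    simp [hπ, this]
  -- key: for i ≠ j, E (v i) (v j) ↔ E (vstar i) (vstar j)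
  have key : ∀ i j : Fin n, E (v i) (v j) ↔ E (vstar i) (vstar j) := by
    intro i j
    by_cases hij : i = j
    · subst hij; constructor <;> intro h <;> exact absurd h (hirr _)
    have hvij : v j ≠ v i := fun h => hij (hv.1 h).symm
    have hsij : vstar i ≠ vstar j := fun h => hij (hvstar.1 h)
    constructor
    · intro hEe
      have h1 : v j = vstar i ∨ E (vstar i) (v j) :=
        (hout i (v j)).1 (Or.inr hEe)
      have h2 : vstar i = v j ∨ E (vstar i) (v j) := by
        rcases h1 with h | h
        · exact Or.inl h.symm
        · exact Or.inr h
      have h3 := (hin j (vstar i)).1 h2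
      rcases h3 with h | h
      · exact absurd h hsij
      · exact h
    · intro hEe
      have h2 : vstar i = v j ∨ E (vstar i) (v j) :=
        (hin j (vstar i)).2 (Or.inr hEe)
      have h1 : v j = vstar i ∨ E (vstar i) (v j) := by
        rcases h2 with h | h
        · exact Or.inl h.symm
        · exact Or.inr h
      have h3 := (hout i (v j)).2 h1
      rcases h3 with h | h
      · exact absurd h hvij
      · exact h
  have hπbij : Function.Bijective π := hvstar.comp e.symm.bijective
  have hauto : ∀ a b : V, E a b ↔ E (π a) (π b) := by
    intro a b
    have ha : a = v (e.symm a) := (e.apply_symm_apply a).symm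
    have hb : b = v (e.symm b) := (e.apply_symm_apply b).symm
    calc E a b ↔ E (v (e.symm a)) (v (e.symm b)) := by rw [← ha, ← hb]
      _ ↔ E (vstar (e.symm a)) (vstar (e.symm b)) := key _ _
      _ ↔ E (π a) (π b) := Iff.rfl
  refine ⟨⟨π, hπbij, hπv, hauto⟩, ⟨φ ∘ π, hinj.comp hπbij.1, ?_, ?_⟩⟩
  · intro i j hij
    simp only [Function.comp_apply, hπv]
    exact hmonostar i j hij
  · intro x y y' hxy hxy' hyy' hE hnE
    have h1 : π x ≠ π y := fun h => hxy (hπbij.1 h)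
    have h2 : π x ≠ π y' := fun h => hxy' (hπbij.1 h)
    have h3 : π y ≠ π y' := fun h => hyy' (hπbij.1 h)
    exact hreal (π x) (π y) (π y') h1 h2 h3 ((hauto x y).1 hE)
      (fun h => hnE ((hauto x y').2 h))
end
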